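/- For every real w > 0, 0 < √(2π) · (1 + w²) · e^{w²/2} · (1 − Φ(w)) − w ≤ 3/(1 + w)³, where Φ is the standard normal cumulative distribution function. -/

import Mathlib

noncomputable section

/-- The standard normal cumulative distribution function
`Φ(w) = ∫_{-∞}^w (1/√(2π)) e^{-t²/2} dt`. -/
def Phi (w : ℝ) : ℝ :=
  ∫ t in Set.Iic w, (1 / Real.sqrt (2 * Real.pi)) * Real.exp (-t ^ 2 / 2)

/-!
Write `g t = e^{-t²/2}`, so that `√(2π) (1 - Φ w) = ∫_w^∞ g`. Since `(-u g)' = (t u - u') g`,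
`∫_w^∞ (t u - u') g = u(w) g(w)` whenever `u g → 0`, so comparing `t u - u'` with `1` bounds the
Gaussian tail by `u(w) g(w)`. For `u = t / (1 + t²)` one has `t u - u' = 1 - 2 / (1 + t²)² < 1`,
giving the lower bound. Adding `3 / ((1 + t)³ (1 + t²))` to `u` raises `t u - u'` by at least
`2 / (1 + t²)²` when `t ≥ 0` (this is `t⁴ - 5t³ + 6t² + t + 7 ≥ 0`), giving the upper bound.
Multiplying by `(1 + w²) e^{w²/2}` turns the two bounds into the claim.
-/

open Real MeasureTheory Set Filter Topology

def gauss (t : ℝ) : ℝ := exp (-t ^ 2 / 2)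

lemma gauss_pos (t : ℝ) : 0 < gauss t := exp_pos _

lemma gauss_eq_exp_neg_mul_sq : gauss = fun t => exp (-(1 / 2) * t ^ 2) := by
  ext t; rw [gauss]; ring_nf

lemma integrable_gauss : Integrable gauss := by
  rw [gauss_eq_exp_neg_mul_sq]; exact integrable_exp_neg_mul_sq (by norm_num)

lemma integral_gauss : ∫ t, gauss t = √(2 * π) := by
  rw [gauss_eq_exp_neg_mul_sq, integral_gaussian]; ring_nf

lemma hasDerivAt_gauss (t : ℝ) : HasDerivAt gauss (-t * gauss t) t := by
  have h : HasDerivAt (fun t : ℝ => -t ^ 2 / 2) (-t) t :=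
    ((hasDerivAt_pow 2 t).neg.div_const 2).congr_deriv (by simp; ring)
  exact h.exp.congr_deriv (mul_comm _ _)

lemma tendsto_gauss_atTop : Tendsto gauss atTop (𝓝 0) := by
  have h : Tendsto (fun t : ℝ => t ^ 2 / 2) atTop atTop :=
    (tendsto_pow_atTop two_ne_zero).atTop_div_const (by norm_num)
  refine (tendsto_exp_neg_atTop_nhds_zero.comp h).congr fun t => ?_
  simp [gauss, neg_div]

lemma exp_mul_gauss_self (w : ℝ) : exp (w ^ 2 / 2) * gauss w = 1 := by
  rw [gauss, ← exp_add]; ring_nf; exact exp_zero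

lemma sqrt_two_pi_mul_one_sub_Phi (w : ℝ) :
    √(2 * π) * (1 - Phi w) = ∫ t in Ioi w, gauss t := by
  have hsplit := intervalIntegral.integral_Iic_add_Ioi (b := w) integrable_gauss.integrableOn
    integrable_gauss.integrableOn
  have hPhi : Phi w = (√(2 * π))⁻¹ * ∫ t in Iic w, gauss t := by
    rw [Phi, ← integral_const_mul]; simp [gauss]
  have hpos : 0 < √(2 * π) := by positivity
  rw [integral_gauss] at hsplit
  rw [hPhi, mul_sub, ← mul_assoc, mul_inv_cancel₀ hpos.ne']
  linarith

lemma tendsto_mul_gauss_atTop {u : ℝ → ℝ} {C : ℝ} (hu : ∀ t ≥ 0, |u t| ≤ C) :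
    Tendsto (fun t => u t * gauss t) atTop (𝓝 0) :=
  isBoundedUnder_le_mul_tendsto_zero
    (isBoundedUnder_of_eventually_le (eventually_ge_atTop 0 |>.mono hu)) tendsto_gauss_atTop

section SteinOperator

variable {u u' : ℝ → ℝ} {w : ℝ}

lemma hasDerivAt_neg_mul_gauss {t : ℝ} (hu : HasDerivAt u (u' t) t) :
    HasDerivAt (fun t => -(u t * gauss t)) ((t * u t - u' t) * gauss t) t :=
  (hu.mul (hasDerivAt_gauss t)).neg.congr_deriv (by ring)

lemma integral_Ioi_gauss_le (hu : ∀ t ∈ Ici w, HasDerivAt u (u' t) t)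
    (hlim : Tendsto (fun t => u t * gauss t) atTop (𝓝 0))
    (hge : ∀ t ∈ Ioi w, 1 ≤ t * u t - u' t) :
    ∫ t in Ioi w, gauss t ≤ u w * gauss w := by
  have hderiv : ∀ t ∈ Ici w, HasDerivAt (fun t => -(u t * gauss t))
      ((t * u t - u' t) * gauss t) t := fun t ht => hasDerivAt_neg_mul_gauss (hu t ht)
  have hlim' : Tendsto (fun t => -(u t * gauss t)) atTop (𝓝 0) := by simpa using hlim.neg
  have hle : ∀ t ∈ Ioi w, gauss t ≤ (t * u t - u' t) * gauss t := fun t ht =>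
    le_mul_of_one_le_left (gauss_pos t).le (hge t ht)
  have hnonneg : ∀ t ∈ Ioi w, 0 ≤ (t * u t - u' t) * gauss t := fun t ht =>
    (gauss_pos t).le.trans (hle t ht)
  calc ∫ t in Ioi w, gauss t ≤ ∫ t in Ioi w, (t * u t - u' t) * gauss t :=
        setIntegral_mono_on integrable_gauss.integrableOn
          (integrableOn_Ioi_deriv_of_nonneg' hderiv hnonneg hlim') measurableSet_Ioi hle
    _ = u w * gauss w := by
        rw [integral_Ioi_of_hasDerivAt_of_nonneg' hderiv hnonneg hlim']; ring

lemma lt_integral_Ioi_gauss (hu : ∀ t ∈ Ici w, HasDerivAt u (u' t) t)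
    (hlim : Tendsto (fun t => u t * gauss t) atTop (𝓝 0))
    (hint : IntegrableOn (fun t => (t * u t - u' t) * gauss t) (Ioi w))
    (hlt : ∀ t ∈ Ioi w, t * u t - u' t < 1) :
    u w * gauss w < ∫ t in Ioi w, gauss t := by
  have hderiv : ∀ t ∈ Ici w, HasDerivAt (fun t => -(u t * gauss t))
      ((t * u t - u' t) * gauss t) t := fun t ht => hasDerivAt_neg_mul_gauss (hu t ht)
  have hlim' : Tendsto (fun t => -(u t * gauss t)) atTop (𝓝 0) := by simpa using hlim.neg
  have hgap : 0 < ∫ t in Ioi w, (gauss t - (t * u t - u' t) * gauss t) := by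
    have hpos : ∀ t ∈ Ioi w, 0 < gauss t - (t * u t - u' t) * gauss t := fun t ht => by
      nlinarith [gauss_pos t, hlt t ht]
    rw [setIntegral_pos_iff_support_of_nonneg_ae
      ((ae_restrict_iff' measurableSet_Ioi).2 (ae_of_all _ fun t ht => (hpos t ht).le))
      (integrable_gauss.integrableOn.sub hint)]
    calc (0 : ENNReal) < volume (Ioi w) := by simp
      _ ≤ _ := by exact measure_mono fun t ht => ⟨(hpos t ht).ne', ht⟩
  rw [integral_sub integrable_gauss.integrableOn hint,
    integral_Ioi_of_hasDerivAt_of_tendsto' hderiv hint hlim'] at hgap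
  linarith

end SteinOperator

def millsLower (t : ℝ) : ℝ := t / (1 + t ^ 2)

def millsGap (t : ℝ) : ℝ := 3 / ((1 + t) ^ 3 * (1 + t ^ 2))

lemma hasDerivAt_millsLower (t : ℝ) :
    HasDerivAt millsLower ((1 - t ^ 2) / (1 + t ^ 2) ^ 2) t := by
  have h : HasDerivAt (fun t : ℝ => 1 + t ^ 2) (2 * t) t := by
    simpa using (hasDerivAt_pow 2 t).const_add 1
  exact ((hasDerivAt_id t).div h (by positivity)).congr_deriv (by simp; ring)

lemma hasDerivAt_millsGap {t : ℝ} (ht : 1 + t ≠ 0) :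
    HasDerivAt millsGap (-3 * (5 * t ^ 2 + 2 * t + 3) / ((1 + t) ^ 4 * (1 + t ^ 2) ^ 2)) t := by
  have h1 : HasDerivAt (fun t : ℝ => 1 + t ^ 2) (2 * t) t := by
    simpa using (hasDerivAt_pow 2 t).const_add 1
  have h2 : HasDerivAt (fun t : ℝ => (1 + t) ^ 3) (3 * (1 + t) ^ 2) t := by
    have h := ((hasDerivAt_id t).const_add 1).pow 3
    exact h.congr_deriv (by simp)
  have h3 : HasDerivAt (fun t : ℝ => (1 + t) ^ 3 * (1 + t ^ 2))
      (3 * (1 + t) ^ 2 * (1 + t ^ 2) + (1 + t) ^ 3 * (2 * t)) t := h2.mul h1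
  refine ((hasDerivAt_const t 3).div h3 (by positivity)).congr_deriv ?_
  field_simp
  ring

lemma mul_millsLower_sub_deriv (t : ℝ) :
    t * millsLower t - (1 - t ^ 2) / (1 + t ^ 2) ^ 2 = 1 - 2 / (1 + t ^ 2) ^ 2 := by
  rw [millsLower]
  field_simp
  ring

lemma le_mul_millsGap_sub_deriv {t : ℝ} (ht : 0 ≤ t) :
    2 / (1 + t ^ 2) ^ 2 ≤
      t * millsGap t - -3 * (5 * t ^ 2 + 2 * t + 3) / ((1 + t) ^ 4 * (1 + t ^ 2) ^ 2) := by
  have hq : 0 < (1 + t) ^ 4 * (1 + t ^ 2) ^ 2 := by positivity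
  have key : t * millsGap t - -3 * (5 * t ^ 2 + 2 * t + 3) / ((1 + t) ^ 4 * (1 + t ^ 2) ^ 2) -
      2 / (1 + t ^ 2) ^ 2 =
        (t ^ 4 - 5 * t ^ 3 + 6 * t ^ 2 + t + 7) / ((1 + t) ^ 4 * (1 + t ^ 2) ^ 2) := by
    rw [millsGap]
    field_simp
    ring
  have hp : 0 ≤ t ^ 4 - 5 * t ^ 3 + 6 * t ^ 2 + t + 7 := by
    nlinarith [sq_nonneg (t ^ 2 - 5 * t / 2 - 1 / 8)]
  linarith [div_nonneg hp hq.le]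

lemma abs_millsLower_le_one (t : ℝ) : |millsLower t| ≤ 1 := by
  rw [millsLower, abs_div, abs_of_pos (by positivity : (0 : ℝ) < 1 + t ^ 2),
    div_le_one (by positivity)]
  nlinarith [abs_nonneg t, sq_abs t]

lemma abs_millsGap_le {t : ℝ} (ht : 0 ≤ t) : |millsGap t| ≤ 3 := by
  have h : 1 ≤ (1 + t) ^ 3 * (1 + t ^ 2) :=
    one_le_mul_of_one_le_of_one_le (one_le_pow₀ (by linarith)) (by nlinarith)
  rw [millsGap, abs_of_nonneg (by positivity)]
  exact div_le_self (by norm_num) h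

lemma millsLower_mul_gauss_lt_integral_Ioi (w : ℝ) :
    millsLower w * gauss w < ∫ t in Ioi w, gauss t := by
  have hbound : ∀ t, |t * millsLower t - (1 - t ^ 2) / (1 + t ^ 2) ^ 2| ≤ 1 := fun t => by
    rw [mul_millsLower_sub_deriv, abs_le]
    have h : 2 / (1 + t ^ 2) ^ 2 ≤ 2 := div_le_self (by norm_num) (one_le_pow₀ (by nlinarith))
    constructor <;> linarith [show 0 < 2 / (1 + t ^ 2) ^ 2 by positivity]
  have hint : Integrable fun t => (t * millsLower t - (1 - t ^ 2) / (1 + t ^ 2) ^ 2) * gauss t := by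
    refine integrable_gauss.mono' (Continuous.aestronglyMeasurable ?_) (ae_of_all _ fun t => ?_)
    · unfold millsLower gauss; fun_prop (disch := intros; positivity)
    · rw [norm_mul, norm_of_nonneg (gauss_pos t).le, Real.norm_eq_abs]
      exact mul_le_of_le_one_left (gauss_pos t).le (hbound t)
  refine lt_integral_Ioi_gauss (fun t _ => hasDerivAt_millsLower t)
    (tendsto_mul_gauss_atTop fun t _ => abs_millsLower_le_one t) hint.integrableOn fun t _ => ?_
  rw [mul_millsLower_sub_deriv]
  linarith [show 0 < 2 / (1 + t ^ 2) ^ 2 by positivity]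

lemma integral_Ioi_gauss_le_millsLower_add_millsGap {w : ℝ} (hw : 0 ≤ w) :
    ∫ t in Ioi w, gauss t ≤ (millsLower w + millsGap w) * gauss w := by
  refine integral_Ioi_gauss_le (u := fun t => millsLower t + millsGap t)
    (fun t ht => (hasDerivAt_millsLower t).add (hasDerivAt_millsGap (by linarith [mem_Ici.1 ht])))
    (tendsto_mul_gauss_atTop (C := 1 + 3) fun t ht =>
      (abs_add_le _ _).trans (add_le_add (abs_millsLower_le_one t) (abs_millsGap_le ht)))
    fun t ht => ?_
  have ht : 0 ≤ t := hw.trans (le_of_lt ht)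
  linarith [mul_millsLower_sub_deriv t, le_mul_millsGap_sub_deriv ht]

lemma one_add_sq_mul_millsLower (t : ℝ) : (1 + t ^ 2) * millsLower t = t :=
  mul_div_cancel₀ t (by positivity)

lemma one_add_sq_mul_millsGap (t : ℝ) : (1 + t ^ 2) * millsGap t = 3 / (1 + t) ^ 3 := by
  rw [millsGap, mul_comm, ← div_div, div_mul_cancel₀ _ (by positivity)]

theorem mills_type_bound_two (w : ℝ) (hw : 0 < w) :
    0 < Real.sqrt (2 * Real.pi) * (1 + w ^ 2) * Real.exp (w ^ 2 / 2) * (1 - Phi w) - w ∧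
    Real.sqrt (2 * Real.pi) * (1 + w ^ 2) * Real.exp (w ^ 2 / 2) * (1 - Phi w) - w ≤
      3 / (1 + w) ^ 3 := by
  have hscale : ∀ c, (1 + w ^ 2) * exp (w ^ 2 / 2) * (c * gauss w) = (1 + w ^ 2) * c :=
    fun c => by linear_combination (1 + w ^ 2) * c * exp_mul_gauss_self w
  have hc : 0 < (1 + w ^ 2) * exp (w ^ 2 / 2) := by positivity
  have hlow := mul_lt_mul_of_pos_left (millsLower_mul_gauss_lt_integral_Ioi w) hc
  have hup :=
    mul_le_mul_of_nonneg_left (integral_Ioi_gauss_le_millsLower_add_millsGap hw.le) hc.le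
  rw [hscale, one_add_sq_mul_millsLower] at hlow
  rw [hscale, mul_add, one_add_sq_mul_millsLower, one_add_sq_mul_millsGap] at hup
  have hE : √(2 * π) * (1 + w ^ 2) * exp (w ^ 2 / 2) * (1 - Phi w) =
      (1 + w ^ 2) * exp (w ^ 2 / 2) * ∫ t in Ioi w, gauss t := by
    rw [← sqrt_two_pi_mul_one_sub_Phi]; ring
  rw [hE]
  constructor <;> linarith
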